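/- arXiv:2407.14915 — 6 statements merged into one kernel-verified Lean document; each statement's English description precedes it below -/
import Mathlib

section
/- Let f, p : ℝⁿ → ℝ be continuously differentiable, h : ℝⁿ → ℝ continuous, and suppose ‖∇f(y) − ∇p(y)‖ ≤ κ for a fixed point y. Define Ψ(y) = h(y) − min_{‖s‖≤1} (∇f(y)ᵀs + h(y+s)) and η(y) = h(y) − min_{‖s‖≤1} (∇p(y)ᵀs + h(y+s)). Then |Ψ(y) − η(y)| ≤ κ. -/
open scoped RealInnerProductSpace

theorem stmt_0 {n : ℕ} (f p h : EuclideanSpace ℝ (Fin n) → ℝ)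
    (hf : ContDiff ℝ 1 f) (hp : ContDiff ℝ 1 p) (hh : Continuous h)
    (y : EuclideanSpace ℝ (Fin n)) (κ : ℝ)
    (hκ : ‖gradient f y - gradient p y‖ ≤ κ) :
    |(h y - sInf ((fun s => ⟪gradient f y, s⟫ + h (y + s)) ''
        Metric.closedBall (0 : EuclideanSpace ℝ (Fin n)) 1)) -
     (h y - sInf ((fun s => ⟪gradient p y, s⟫ + h (y + s)) ''
        Metric.closedBall (0 : EuclideanSpace ℝ (Fin n)) 1))| ≤ κ := by
  set g1 : EuclideanSpace ℝ (Fin n) → ℝ := fun s => ⟪gradient f y, s⟫ + h (y + s) with hg1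
  set g2 : EuclideanSpace ℝ (Fin n) → ℝ := fun s => ⟪gradient p y, s⟫ + h (y + s) with hg2
  have hc1 : Continuous g1 := by
    exact ((continuous_const.inner continuous_id).add (hh.comp (continuous_const.add continuous_id)))
  have hc2 : Continuous g2 := by
    exact ((continuous_const.inner continuous_id).add (hh.comp (continuous_const.add continuous_id)))
  set B := Metric.closedBall (0 : EuclideanSpace ℝ (Fin n)) 1 with hB
  have hcomp : IsCompact B := isCompact_closedBall _ _
  have hbdd1 : BddBelow (g1 '' B) := (hcomp.image hc1).bddBelow
  have hbdd2 : BddBelow (g2 '' B) := (hcomp.image hc2).bddBelow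
  have hne : B.Nonempty := ⟨0, by simp [hB]⟩
  have hκ0 : 0 ≤ κ := le_trans (norm_nonneg _) hκ
  have key : ∀ s ∈ B, |g1 s - g2 s| ≤ κ := by
    intro s hs
    have : g1 s - g2 s = ⟪gradient f y - gradient p y, s⟫ := by
      simp only [hg1, hg2, inner_sub_left]; ring
    rw [this]
    calc |⟪gradient f y - gradient p y, s⟫| ≤ ‖gradient f y - gradient p y‖ * ‖s‖ :=
          abs_real_inner_le_norm _ _
      _ ≤ κ * 1 := by
          apply mul_le_mul hκ _ (norm_nonneg _) hκ0
          simpa using Metric.mem_closedBall.mp hs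
      _ = κ := mul_one κ
  have h12 : sInf (g1 '' B) ≤ sInf (g2 '' B) + κ := by
    rw [← sub_le_iff_le_add]
    apply le_csInf (hne.image _)
    rintro _ ⟨s, hs, rfl⟩
    have h1 : sInf (g1 '' B) ≤ g1 s := csInf_le hbdd1 ⟨s, hs, rfl⟩
    have := (abs_le.mp (key s hs)).2
    linarith
  have h21 : sInf (g2 '' B) ≤ sInf (g1 '' B) + κ := by
    rw [← sub_le_iff_le_add]
    apply le_csInf (hne.image _)
    rintro _ ⟨s, hs, rfl⟩
    have h1 : sInf (g2 '' B) ≤ g2 s := csInf_le hbdd2 ⟨s, hs, rfl⟩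
    have := (abs_le.mp (key s hs)).1
    linarith
  rw [abs_le]
  constructor <;> linarith
end

section
/- Let f : ℝⁿ → ℝ be differentiable with L_f-Lipschitz gradient on ℝⁿ, and let h : ℝⁿ → ℝ be L_h-Lipschitz. Define Ψ₁(x) = h(x) − min_{‖s‖≤1} (∇f(x)ᵀs + h(x+s)). Then Ψ₁ is Lipschitz continuous with Lipschitz constant L_f + 2·L_h, i.e. |Ψ₁(x) − Ψ₁(y)| ≤ (L_f + 2L_h)·‖x − y‖ for all x, y. -/
open scoped RealInnerProductSpace

/-! For each fixed `s` in the unit ball, `x ↦ ⟪∇f x, s⟫ + h (x + s)` is `(Lf + Lh)`-Lipschitz, and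
an infimum of a uniformly Lipschitz family is Lipschitz with the same constant; subtracting it
from the `Lh`-Lipschitz `h` gives `Lf + 2 Lh`. -/

section InfImage

variable {α : Type*} {S : Set α} {F G : α → ℝ} {c : ℝ}

theorem csInf_image_le_csInf_image_add (hS : S.Nonempty) (hF : BddBelow (F '' S))
    (hFG : ∀ s ∈ S, F s ≤ G s + c) : sInf (F '' S) ≤ sInf (G '' S) + c := by
  suffices sInf (F '' S) - c ≤ sInf (G '' S) by linarith
  refine le_csInf (hS.image G) ?_
  rintro _ ⟨s, hs, rfl⟩
  linarith [csInf_le hF (Set.mem_image_of_mem F hs), hFG s hs]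

theorem abs_csInf_image_sub_csInf_image_le (hS : S.Nonempty) (hF : BddBelow (F '' S))
    (hG : BddBelow (G '' S)) (hFG : ∀ s ∈ S, |F s - G s| ≤ c) :
    |sInf (F '' S) - sInf (G '' S)| ≤ c := by
  rw [abs_sub_le_iff]
  constructor
  · linarith [csInf_image_le_csInf_image_add hS hF fun s hs =>
      (by linarith [(abs_le.mp (hFG s hs)).2] : F s ≤ G s + c)]
  · linarith [csInf_image_le_csInf_image_add hS hG fun s hs =>
      (by linarith [(abs_le.mp (hFG s hs)).1] : G s ≤ F s + c)]

end InfImage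

theorem continuous_of_abs_sub_le_mul {E : Type*} [SeminormedAddCommGroup E] {h : E → ℝ} {L : ℝ}
    (hL : ∀ x y, |h x - h y| ≤ L * ‖x - y‖) : Continuous h :=
  (LipschitzWith.of_dist_le' (K := L) fun x y => by
    rw [Real.dist_eq, dist_eq_norm]; exact hL x y).continuous

section ModelFunction

variable {E : Type*} [NormedAddCommGroup E] [InnerProductSpace ℝ E]

theorem abs_inner_add_sub_inner_add_le {g₁ g₂ x y s : E} {h : E → ℝ} {Lf Lh : ℝ}
    (hs : ‖s‖ ≤ 1) (hg : ‖g₁ - g₂‖ ≤ Lf * ‖x - y‖)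
    (hLh : ∀ x y, |h x - h y| ≤ Lh * ‖x - y‖) :
    |(⟪g₁, s⟫ + h (x + s)) - (⟪g₂, s⟫ + h (y + s))| ≤ (Lf + Lh) * ‖x - y‖ := by
  have hinner : |⟪g₁ - g₂, s⟫| ≤ Lf * ‖x - y‖ :=
    calc |⟪g₁ - g₂, s⟫| ≤ ‖g₁ - g₂‖ * ‖s‖ := abs_real_inner_le_norm _ _
      _ ≤ ‖g₁ - g₂‖ := mul_le_of_le_one_right (norm_nonneg _) hs
      _ ≤ Lf * ‖x - y‖ := hg
  have hshift : |h (x + s) - h (y + s)| ≤ Lh * ‖x - y‖ := by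
    simpa only [add_sub_add_right_eq_sub] using hLh (x + s) (y + s)
  calc |(⟪g₁, s⟫ + h (x + s)) - (⟪g₂, s⟫ + h (y + s))|
      = |⟪g₁ - g₂, s⟫ + (h (x + s) - h (y + s))| := by rw [inner_sub_left]; ring_nf
    _ ≤ |⟪g₁ - g₂, s⟫| + |h (x + s) - h (y + s)| := abs_add_le _ _
    _ ≤ (Lf + Lh) * ‖x - y‖ := by linarith

end ModelFunction

theorem stmt_1_general {n : ℕ} (f h : EuclideanSpace ℝ (Fin n) → ℝ)
    (Lf Lh : ℝ)
    (hLf : ∀ x y, ‖gradient f x - gradient f y‖ ≤ Lf * ‖x - y‖)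
    (hLh : ∀ x y, |h x - h y| ≤ Lh * ‖x - y‖)
    (Ψ : EuclideanSpace ℝ (Fin n) → ℝ)
    (hΨ : ∀ x, Ψ x = h x - sInf ((fun s => ⟪gradient f x, s⟫ + h (x + s)) ''
        Metric.closedBall (0 : EuclideanSpace ℝ (Fin n)) 1)) :
    ∀ x y, |Ψ x - Ψ y| ≤ (Lf + 2 * Lh) * ‖x - y‖ := by
  intro x y
  set B := Metric.closedBall (0 : EuclideanSpace ℝ (Fin n)) 1
  have hB : B.Nonempty := ⟨0, Metric.mem_closedBall_self zero_le_one⟩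
  have hcont := continuous_of_abs_sub_le_mul hLh
  have hbdd : ∀ z, BddBelow ((fun s => ⟪gradient f z, s⟫ + h (z + s)) '' B) := fun z =>
    ((isCompact_closedBall 0 1).image (by fun_prop)).bddBelow
  have hinf := abs_csInf_image_sub_csInf_image_le hB (hbdd x) (hbdd y) fun s hs =>
    abs_inner_add_sub_inner_add_le (mem_closedBall_zero_iff.mp hs) (hLf x y) hLh
  rw [hΨ x, hΨ y]
  calc |h x - _ - (h y - _)| ≤ |h x - h y| + |sInf _ - sInf _| := by
        rw [sub_sub_sub_comm]; exact abs_sub _ _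
    _ ≤ Lh * ‖x - y‖ + (Lf + Lh) * ‖x - y‖ := add_le_add (hLh x y) hinf
    _ = (Lf + 2 * Lh) * ‖x - y‖ := by ring

theorem stmt_1 {n : ℕ} (f h : EuclideanSpace ℝ (Fin n) → ℝ)
    (Lf Lh : ℝ)
    (hf : Differentiable ℝ f)
    (hLf : ∀ x y, ‖gradient f x - gradient f y‖ ≤ Lf * ‖x - y‖)
    (hLh : ∀ x y, |h x - h y| ≤ Lh * ‖x - y‖)
    (Ψ : EuclideanSpace ℝ (Fin n) → ℝ)
    (hΨ : ∀ x, Ψ x = h x - sInf ((fun s => ⟪gradient f x, s⟫ + h (x + s)) ''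
        Metric.closedBall (0 : EuclideanSpace ℝ (Fin n)) 1)) :
    ∀ x y, |Ψ x - Ψ y| ≤ (Lf + 2 * Lh) * ‖x - y‖ :=
  stmt_1_general f h Lf Lh hLf hLh Ψ hΨ
end

section
/- Let g : ℝⁿ → ℝ be a continuous function with g(0) = 0, and for r > 0 define η_r = − min_{‖s‖≤r} g(s), assuming η_r ≥ 0 for all r. If g is convex, then for any r > 0, η_r ≥ min{1, r} · η₁. -/
/-! Convexity and `g 0 = 0` give `g (r • s) ≤ r * g s` for `0 ≤ r ≤ 1`, so shrinking the unit ball by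
`r` scales its infimum by at most `r`; for `r ≥ 1` the ball only grows and the infimum only drops. -/

open Metric

theorem ConvexOn.map_smul_le_mul_of_map_zero {E : Type*} [AddCommGroup E] [Module ℝ E]
    {s : Set E} {g : E → ℝ} (hconv : ConvexOn ℝ s g) (h0 : (0 : E) ∈ s) (hg0 : g 0 = 0)
    {x : E} (hx : x ∈ s) {t : ℝ} (ht₀ : 0 ≤ t) (ht₁ : t ≤ 1) :
    g (t • x) ≤ t * g x := by
  simpa [hg0] using hconv.2 hx h0 ht₀ (sub_nonneg.2 ht₁) (add_sub_cancel t 1)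

section ClosedBall

variable {E : Type*} [SeminormedAddCommGroup E] {g : E → ℝ}

theorem sInf_image_closedBall_anti {r R : ℝ} (hr : 0 ≤ r) (hrR : r ≤ R)
    (hbdd : BddBelow (g '' closedBall 0 R)) :
    sInf (g '' closedBall 0 R) ≤ sInf (g '' closedBall 0 r) :=
  csInf_le_csInf hbdd ⟨g 0, Set.mem_image_of_mem g (mem_closedBall_self hr)⟩
    (Set.image_mono (closedBall_subset_closedBall hrR))

theorem ConvexOn.sInf_image_closedBall_le_mul [NormedSpace ℝ E]
    (hconv : ConvexOn ℝ Set.univ g) (hg0 : g 0 = 0) {r : ℝ} (hr₀ : 0 < r) (hr₁ : r ≤ 1)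
    (hbdd : BddBelow (g '' closedBall 0 r)) :
    sInf (g '' closedBall 0 r) ≤ r * sInf (g '' closedBall 0 1) := by
  rw [mul_comm, ← div_le_iff₀ hr₀]
  refine le_csInf ⟨g 0, Set.mem_image_of_mem g (mem_closedBall_self zero_le_one)⟩ ?_
  rintro _ ⟨s, hs, rfl⟩
  have hrs : r • s ∈ closedBall (0 : E) r := by
    rw [mem_closedBall_zero_iff, norm_smul, Real.norm_of_nonneg hr₀.le]
    exact mul_le_of_le_one_right hr₀.le (mem_closedBall_zero_iff.1 hs)
  rw [div_le_iff₀ hr₀, mul_comm]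
  calc sInf (g '' closedBall 0 r) ≤ g (r • s) := csInf_le hbdd (Set.mem_image_of_mem g hrs)
    _ ≤ r * g s :=
      hconv.map_smul_le_mul_of_map_zero (Set.mem_univ 0) hg0 (Set.mem_univ s) hr₀.le hr₁

end ClosedBall

theorem stmt_2_general {n : ℕ} (g : EuclideanSpace ℝ (Fin n) → ℝ)
    (hg : Continuous g) (hg0 : g 0 = 0)
    (hconv : ConvexOn ℝ Set.univ g) :
    ∀ r : ℝ, 0 < r →
      min 1 r * (-sInf (g '' Metric.closedBall (0 : EuclideanSpace ℝ (Fin n)) 1)) ≤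
        -sInf (g '' Metric.closedBall (0 : EuclideanSpace ℝ (Fin n)) r) := by
  intro r hr
  have hbdd : ∀ t : ℝ, BddBelow (g '' closedBall (0 : EuclideanSpace ℝ (Fin n)) t) :=
    fun t => ((isCompact_closedBall 0 t).image hg).bddBelow
  rcases le_total 1 r with h1r | hr1
  · rw [min_eq_left h1r, one_mul, neg_le_neg_iff]
    exact sInf_image_closedBall_anti zero_le_one h1r (hbdd r)
  · rw [min_eq_right hr1, mul_neg, neg_le_neg_iff]
    exact hconv.sInf_image_closedBall_le_mul hg0 hr hr1 (hbdd r)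

theorem stmt_2 {n : ℕ} (g : EuclideanSpace ℝ (Fin n) → ℝ)
    (hg : Continuous g) (hg0 : g 0 = 0)
    (hconv : ConvexOn ℝ Set.univ g)
    (hη : ∀ r : ℝ, 0 < r →
      0 ≤ -sInf (g '' Metric.closedBall (0 : EuclideanSpace ℝ (Fin n)) r)) :
    ∀ r : ℝ, 0 < r →
      min 1 r * (-sInf (g '' Metric.closedBall (0 : EuclideanSpace ℝ (Fin n)) 1)) ≤
        -sInf (g '' Metric.closedBall (0 : EuclideanSpace ℝ (Fin n)) r) :=
  stmt_2_general g hg hg0 hconv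
end

section
/- Let g ∈ ℝⁿ, H ∈ ℝⁿˣⁿ symmetric, L_h > 0, η > 0, Δ > 0, e₃c₁ > 0, and let s ∈ ℝⁿ with ‖s‖ ≤ Δ. Suppose −(gᵀs + (1/2)sᵀHs + δ_h) ≥ e₃c₁·η·min{Δ, η/max{1,‖H‖}} where |δ_h| ≤ L_h‖s‖ (δ_h = h(x+s) − h(x) for an L_h-Lipschitz h) and the left-hand side is nonnegative. Then ‖s‖ ≥ c₂·τ·min{Δ, η/max{1,‖H‖}}, where c₂ = 2e₃c₁/(1 + √(1 + 2e₃c₁)) and τ = min{η/(‖g‖ + L_h), 1}. -/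
open scoped RealInnerProductSpace

set_option maxHeartbeats 2000000 in
theorem stmt_6 {n : ℕ} (g s : EuclideanSpace ℝ (Fin n))
    (H : EuclideanSpace ℝ (Fin n) →L[ℝ] EuclideanSpace ℝ (Fin n))
    (hsym : ∀ u v, ⟪H u, v⟫ = ⟪u, H v⟫)
    (Lh η Δ e3c1 δh : ℝ)
    (hLh : 0 < Lh) (hη : 0 < η) (hΔ : 0 < Δ)
    (he3c1 : 0 < e3c1) (he3c1' : e3c1 < 1 / 2)
    (hs : ‖s‖ ≤ Δ)
    (hδh : |δh| ≤ Lh * ‖s‖)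
    (hnonneg : 0 ≤ -(⟪g, s⟫ + (1 / 2) * ⟪s, H s⟫ + δh))
    (hdec : e3c1 * η * min Δ (η / max 1 ‖H‖) ≤ -(⟪g, s⟫ + (1 / 2) * ⟪s, H s⟫ + δh)) :
    (2 * e3c1 / (1 + Real.sqrt (1 + 2 * e3c1))) * min (η / (‖g‖ + Lh)) 1 *
        min Δ (η / max 1 ‖H‖) ≤ ‖s‖ := by
  set a := ‖s‖ with ha
  set M := max 1 ‖H‖ with hM
  set m := min Δ (η / M) with hm
  set G := ‖g‖ + Lh with hG
  set r := Real.sqrt (1 + 2 * e3c1) with hrdef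
  set c := 2 * e3c1 / (1 + r) with hc
  set τ := min (η / G) 1 with hτ
  have hGpos : 0 < G := by positivity
  have hM1 : (1:ℝ) ≤ M := le_max_left _ _
  have hMpos : (0:ℝ) < M := lt_of_lt_of_le one_pos hM1
  have hmpos : 0 < m := lt_min hΔ (by positivity)
  have hMm : M * m ≤ η := by
    have : m ≤ η / M := min_le_right _ _
    calc M * m ≤ M * (η / M) := by nlinarith
    _ = η := by field_simp
  have hτG : τ * G ≤ η := by
    have : τ ≤ η / G := min_le_left _ _
    calc τ * G ≤ (η / G) * G := by nlinarith
    _ = η := by field_simp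
  have hτ1 : τ ≤ 1 := min_le_right _ _
  have hτpos : 0 < τ := lt_min (by positivity) one_pos
  have hr2 : r ^ 2 = 1 + 2 * e3c1 := Real.sq_sqrt (by linarith)
  have hr1 : 1 ≤ r := by
    have h9 : Real.sqrt 1 ≤ r := Real.sqrt_le_sqrt (by linarith)
    simpa using h9
  have hHM : ‖H‖ ≤ M := le_max_right _ _
  have hanneg : 0 ≤ a := norm_nonneg s
  have h1 : -(⟪g, s⟫) ≤ ‖g‖ * a := by
    have := abs_real_inner_le_norm g s
    rw [abs_le] at this; linarith [this.1]
  have h2 : -(⟪s, H s⟫) ≤ ‖H‖ * a ^ 2 := by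
    have h3 := abs_real_inner_le_norm s (H s)
    have h4 : ‖H s‖ ≤ ‖H‖ * ‖s‖ := H.le_opNorm s
    rw [abs_le] at h3
    nlinarith [h3.1, norm_nonneg (H s), norm_nonneg H]
  have h3 : -δh ≤ Lh * a := by
    rw [abs_le] at hδh; linarith [hδh.1]
  have hgnn : 0 ≤ ‖g‖ := norm_nonneg g
  clear_value a M m G r c τ
  have hceq : c = r - 1 := by
    rw [hc]
    rw [div_eq_iff (by linarith)]
    linear_combination -hr2
  have hcpos : 0 < c := by rw [hceq]; nlinarith [hr2]
  have hckey : c + c ^ 2 / 2 = e3c1 := by rw [hceq]; linear_combination hr2 / 2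
  have hupper : e3c1 * η * m ≤ G * a + M * a ^ 2 / 2 := by
    have : -(⟪g, s⟫ + (1 / 2) * ⟪s, H s⟫ + δh) ≤ G * a + M * a ^ 2 / 2 := by
      nlinarith [sq_nonneg a]
    linarith [hdec]
  by_contra hcon
  push_neg at hcon
  have hlt : a < c * τ * m := hcon
  have hb1 : G * a < c * η * m := by
    calc G * a < G * (c * τ * m) := by nlinarith
    _ = c * m * (τ * G) := by ring
    _ ≤ c * m * η := by nlinarith
    _ = c * η * m := by ring
  have hb2 : M * a ^ 2 / 2 ≤ c ^ 2 / 2 * η * m := by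
    have haa : a ^ 2 ≤ a * (c * τ * m) := by nlinarith
    calc M * a ^ 2 / 2 ≤ M * (a * (c * τ * m)) / 2 := by nlinarith
    _ = (c * τ / 2) * a * (M * m) := by ring
    _ ≤ (c * τ / 2) * a * η := by nlinarith
    _ ≤ (c * τ / 2) * (c * τ * m) * η := by
        have h5 : (0:ℝ) ≤ c * τ / 2 * η := by positivity
        have h6 := mul_le_mul_of_nonneg_left hlt.le h5
        nlinarith [h6]
    _ ≤ c ^ 2 / 2 * η * m := by
        have hτsq : τ ^ 2 ≤ 1 := by nlinarith
        have h7 : (0:ℝ) ≤ c ^ 2 / 2 * η * m := by positivity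
        have h8 := mul_le_mul_of_nonneg_left hτsq h7
        nlinarith [h8]
  have hfin : c * η * m + c ^ 2 / 2 * η * m = e3c1 * η * m := by
    linear_combination (η * m) * hckey
  linarith [hupper, hb1, hb2, hfin]
end

section
/- Let m : ℝⁿ → ℝ be of the form m(x+s) = p(x+s) + h(x+s) where p(x+s) = f(x) + gᵀs + (1/2)sᵀHs with H symmetric, and h is convex and continuous. Let η_r = (g ᵀ0 + h(x)) − min_{‖s‖≤r} (gᵀs + h(x+s)) for r > 0, and let s* be a global minimizer of m(x+·) over B(0,Δ) with 0 < Δ ≤ Δ_max and Δ_max > 1. Then m(x) − m(x+s*) ≥ c₁·η₁·min{Δ, η₁/max{1,‖H‖}}, where c₁ = (1/2)·min{1, 1/Δ_max²}. -/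
open scoped RealInnerProductSpace

set_option maxHeartbeats 1000000 in
theorem stmt_7 {n : ℕ} (h : EuclideanSpace ℝ (Fin n) → ℝ)
    (hconv : ConvexOn ℝ Set.univ h) (hcont : Continuous h)
    (x g : EuclideanSpace ℝ (Fin n))
    (H : EuclideanSpace ℝ (Fin n) →L[ℝ] EuclideanSpace ℝ (Fin n))
    (hsym : ∀ u v, ⟪H u, v⟫ = ⟪u, H v⟫)
    (fx Δ Δmax : ℝ) (hΔ : 0 < Δ) (hΔmax : Δ ≤ Δmax) (hΔmax1 : 1 < Δmax)
    (m : EuclideanSpace ℝ (Fin n) → ℝ)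
    (hm : ∀ s, m s = fx + ⟪g, s⟫ + (1 / 2) * ⟪s, H s⟫ + h (x + s))
    (sstar : EuclideanSpace ℝ (Fin n))
    (hsstar : sstar ∈ Metric.closedBall (0 : EuclideanSpace ℝ (Fin n)) Δ)
    (hmin : ∀ s ∈ Metric.closedBall (0 : EuclideanSpace ℝ (Fin n)) Δ, m sstar ≤ m s)
    (η₁ : ℝ)
    (hη₁ : η₁ = h x - sInf ((fun s => ⟪g, s⟫ + h (x + s)) ''
        Metric.closedBall (0 : EuclideanSpace ℝ (Fin n)) 1)) :
    m 0 - m sstar ≥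
      ((1 / 2) * min 1 (1 / Δmax ^ 2)) * η₁ * min Δ (η₁ / max 1 ‖H‖) := by
  classical
  set ℓ : EuclideanSpace ℝ (Fin n) → ℝ := fun s => ⟪g, s⟫ + h (x + s) with hℓ
  have hℓcont : Continuous ℓ :=
    (continuous_const.inner continuous_id).add
      (hcont.comp (continuous_const.add continuous_id))
  obtain ⟨st, hstmem, hstmin⟩ :=
    (isCompact_closedBall (0 : EuclideanSpace ℝ (Fin n)) 1).exists_isMinOn
      ⟨0, Metric.mem_closedBall_self zero_le_one⟩ hℓcont.continuousOn
  have hsinf : sInf (ℓ '' Metric.closedBall (0 : EuclideanSpace ℝ (Fin n)) 1) = ℓ st := by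
    apply IsLeast.csInf_eq
    exact ⟨⟨st, hstmem, rfl⟩, by rintro y ⟨z, hz, rfl⟩; exact hstmin hz⟩
  have hη₁' : η₁ = h x - ℓ st := by rw [hη₁, ← hsinf]
  have hℓ0 : ℓ 0 = h x := by simp [hℓ]
  have hη₁nn : 0 ≤ η₁ := by
    have h0 := hstmin (Metric.mem_closedBall_self zero_le_one)
    rw [hη₁']
    simp only [Set.mem_setOf_eq, hℓ0] at h0
    have : ℓ st ≤ h x := by simpa [hℓ0] using h0
    linarith
  set β : ℝ := max 1 ‖H‖ with hβ
  have hβpos : (0:ℝ) < β := lt_of_lt_of_le one_pos (le_max_left _ _)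
  set t : ℝ := min Δ 1 with ht
  have htpos : 0 < t := lt_min hΔ one_pos
  have htle1 : t ≤ 1 := min_le_right _ _
  have htleΔ : t ≤ Δ := min_le_left _ _
  set θ : ℝ := min 1 (η₁ / (β * t)) with hθ
  have hθnn : 0 ≤ θ := le_min zero_le_one (div_nonneg hη₁nn (mul_pos hβpos htpos).le)
  have hθle1 : θ ≤ 1 := min_le_left _ _
  have hstnorm : ‖st‖ ≤ 1 := by simpa using hstmem
  set c : ℝ := θ * t with hc
  have hcnn : 0 ≤ c := mul_nonneg hθnn htpos.le
  have hclet : c ≤ t := by nlinarith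
  have hcle1 : c ≤ 1 := le_trans hclet htle1
  have hmemΔ : c • st ∈ Metric.closedBall (0 : EuclideanSpace ℝ (Fin n)) Δ := by
    simp only [Metric.mem_closedBall, dist_zero_right, norm_smul, Real.norm_eq_abs,
      abs_of_nonneg hcnn]
    nlinarith [norm_nonneg st]
  -- convexity step
  have hconvstep : h (x + c • st) ≤ c * h (x + st) + (1 - c) * h x := by
    have hcv := hconv.2 (Set.mem_univ (x + st)) (Set.mem_univ x) hcnn
      (by linarith : (0:ℝ) ≤ 1 - c) (by ring)
    have heq : c • (x + st) + (1 - c) • x = x + c • st := by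
      module
    rw [heq] at hcv
    simpa [smul_eq_mul] using hcv
  -- model value at trial point
  have hmstep : m (c • st) =
      fx + c * ⟪g, st⟫ + (1 / 2) * (c ^ 2 * ⟪st, H st⟫) + h (x + c • st) := by
    rw [hm, real_inner_smul_right, map_smul, real_inner_smul_left, real_inner_smul_right]
    ring
  have hm0 : m 0 = fx + h x := by
    rw [hm]; simp
  -- curvature bound
  have hQ : ⟪st, H st⟫ ≤ β := by
    have h1 : ⟪st, H st⟫ ≤ ‖st‖ * ‖H st‖ := real_inner_le_norm _ _
    have h2 : ‖H st‖ ≤ ‖H‖ * ‖st‖ := H.le_opNorm st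
    have h3 : ‖H‖ ≤ β := le_max_right _ _
    nlinarith [norm_nonneg st, norm_nonneg (H st), norm_nonneg H]
  -- key decrease bound
  have key : m 0 - m sstar ≥ c * η₁ - c ^ 2 * β / 2 := by
    have h1 := hmin _ hmemΔ
    have hℓst : ℓ st = ⟪g, st⟫ + h (x + st) := rfl
    have h2 : m (c • st) ≤ m 0 - c * η₁ + c ^ 2 * β / 2 := by
      rw [hmstep, hm0]
      have hη : η₁ = h x - (⟪g, st⟫ + h (x + st)) := by rw [hη₁', hℓst]
      have e1 : c ^ 2 * ⟪st, H st⟫ ≤ c ^ 2 * β := mul_le_mul_of_nonneg_left hQ (sq_nonneg c)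
      have e2 : c * η₁ = c * h x - c * ⟪g, st⟫ - c * h (x + st) := by rw [hη]; ring
      linarith [hconvstep]
    linarith
  -- arithmetic on θ, t
  have hθβt : θ * (β * t) ≤ η₁ := by
    have := min_le_right 1 (η₁ / (β * t))
    calc θ * (β * t) ≤ (η₁ / (β * t)) * (β * t) :=
          mul_le_mul_of_nonneg_right this (mul_pos hβpos htpos).le
      _ = η₁ := by field_simp
  have hstep1 : c * η₁ - c ^ 2 * β / 2 ≥ c * η₁ / 2 := by
    have e0 : c ^ 2 * β = (θ * (β * t)) * c := by rw [hc]; ring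
    have e : c ^ 2 * β ≤ c * η₁ := by
      rw [e0, mul_comm c η₁]
      exact mul_le_mul_of_nonneg_right hθβt hcnn
    linarith only [e]
  have hct : c = min t (η₁ / β) := by
    rw [hc, hθ]
    rcases le_total 1 (η₁ / (β * t)) with hle | hle
    · rw [min_eq_left hle, one_mul, min_eq_left]
      rw [le_div_iff₀ (mul_pos hβpos htpos)] at hle
      rw [le_div_iff₀ hβpos]
      nlinarith
    · rw [min_eq_right hle, min_eq_right, div_mul_eq_mul_div, mul_comm β t,
        ← div_div, mul_div_assoc]
      · field_simp
      · rw [div_le_iff₀ hβpos]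
        rw [div_le_one (mul_pos hβpos htpos)] at hle
        nlinarith
  -- final comparison of min's
  have hminβ : min 1 (1 / Δmax ^ 2) * min Δ (η₁ / β) ≤ min t (η₁ / β) := by
    have hηβnn : 0 ≤ η₁ / β := div_nonneg hη₁nn hβpos.le
    rcases le_or_gt Δ 1 with hΔ1 | hΔ1
    · have htΔ : t = Δ := min_eq_left hΔ1
      rw [htΔ]
      have h1 : min 1 (1 / Δmax ^ 2) ≤ 1 := min_le_left _ _
      have h0 : 0 ≤ min 1 (1 / Δmax ^ 2) := le_min zero_le_one (by positivity)
      nlinarith [le_min hΔ.le hηβnn]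
    · have ht1 : t = 1 := min_eq_right hΔ1.le
      rw [ht1]
      have hD2 : (1:ℝ) / Δmax ^ 2 ≤ 1 := by
        rw [div_le_one (by positivity)]; nlinarith
      rw [min_eq_right hD2]
      apply le_min
      · have : min Δ (η₁ / β) ≤ Δ := min_le_left _ _
        have hΔmax' : (0:ℝ) < Δmax := by linarith
        rw [div_mul_eq_mul_div, one_mul, div_le_one (by positivity)]
        nlinarith
      · have h1 : min Δ (η₁ / β) ≤ η₁ / β := min_le_right _ _
        have h0 : 0 ≤ min Δ (η₁ / β) := le_min hΔ.le hηβnn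
        nlinarith [sq_nonneg Δmax]
  have : ((1 / 2) * min 1 (1 / Δmax ^ 2)) * η₁ * min Δ (η₁ / β) ≤ c * η₁ / 2 := by
    rw [hct]
    have := mul_le_mul_of_nonneg_left hminβ hη₁nn
    nlinarith
  calc ((1 / 2) * min 1 (1 / Δmax ^ 2)) * η₁ * min Δ (η₁ / max 1 ‖H‖)
      ≤ c * η₁ / 2 := this
    _ ≤ c * η₁ - c ^ 2 * β / 2 := hstep1
    _ ≤ m 0 - m sstar := key
end

section
/- Let h : ℝⁿ → ℝ be convex and L_h-Lipschitz, f : ℝⁿ → ℝ continuously differentiable, and suppose a sequence x_j → x* and parameters μ_j → 0⁺ satisfy ∇f(x_j) + ∇M_h^{μ_j}(x_j) → 0, where M_h^μ is the Moreau envelope of h. Then −∇f(x*) ∈ ∂h(x*), i.e. 0 ∈ ∇f(x*) + ∂h(x*), so x* is a stationary point of Φ = f + h. -/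
/-!
Write `p = prox_{μh}(x)`. Optimality of `p` in the strongly convex problem defining the Moreau
envelope makes `(x - p)/μ` a subgradient of `h` at `p`; subgradient monotonicity makes the prox
map nonexpansive, and comparing the envelope at nearby points through their prox points then shows
that `(x - p)/μ` is also the gradient of the envelope at `x`. Lipschitz continuity of `h` gives
`‖p - x‖ ≤ 2 L_h μ`, so along the sequence `p_j → x*` while `(x_j - p_j)/μ_j → -∇f(x*)`, and the
subgradient inequality passes to the limit because `h` is continuous.
-/

open Set Filter Topology

open scoped RealInnerProductSpace

section ProxPoint

variable {E : Type*} [NormedAddCommGroup E]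

noncomputable def moreauEnvelope (h : E → ℝ) (μ : ℝ) (y : E) : ℝ :=
  sInf (range fun z => h z + ‖z - y‖ ^ 2 / (2 * μ))

def IsProxPoint (h : E → ℝ) (μ : ℝ) (y p : E) : Prop :=
  ∀ z, h p + ‖p - y‖ ^ 2 / (2 * μ) ≤ h z + ‖z - y‖ ^ 2 / (2 * μ)

variable {h : E → ℝ} {μ : ℝ} {K : NNReal}

theorem norm_sub_le_of_add_sq_div_le (hh : LipschitzWith K h) (hμ : 0 < μ) {y z : E}
    (hz : h z + ‖z - y‖ ^ 2 / (2 * μ) ≤ h y) : ‖z - y‖ ≤ 2 * K * μ := by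
  have hKz : h y - h z ≤ K * ‖z - y‖ := by
    have := hh.dist_le_mul y z
    rw [Real.dist_eq, dist_comm, dist_eq_norm] at this
    exact (le_abs_self _).trans this
  have hsq : ‖z - y‖ ^ 2 ≤ 2 * K * μ * ‖z - y‖ := by
    have := (div_le_iff₀ (by positivity : (0 : ℝ) < 2 * μ)).1
      (by linarith : ‖z - y‖ ^ 2 / (2 * μ) ≤ K * ‖z - y‖)
    linarith
  by_contra! hlt
  have hpos : 0 < ‖z - y‖ := lt_of_le_of_lt (by positivity) hlt
  nlinarith

theorem exists_isProxPoint [ProperSpace E] (hh : LipschitzWith K h) (hμ : 0 < μ) (y : E) :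
    ∃ p, IsProxPoint h μ y p := by
  refine (hh.continuous.add (by fun_prop)).exists_forall_le_of_isBounded y ?_
  refine (Metric.isBounded_closedBall (x := y) (r := 2 * K * μ)).subset fun z hz => ?_
  rw [Metric.mem_closedBall, dist_eq_norm]
  exact norm_sub_le_of_add_sq_div_le hh hμ (by simpa using hz)

namespace IsProxPoint

variable {y p : E}

theorem norm_sub_le (hp : IsProxPoint h μ y p) (hh : LipschitzWith K h) (hμ : 0 < μ) :
    ‖p - y‖ ≤ 2 * K * μ :=
  norm_sub_le_of_add_sq_div_le hh hμ (by simpa using hp y)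

theorem moreauEnvelope_eq (hp : IsProxPoint h μ y p) :
    moreauEnvelope h μ y = h p + ‖p - y‖ ^ 2 / (2 * μ) :=
  le_antisymm (csInf_le ⟨_, forall_mem_range.2 hp⟩ ⟨p, rfl⟩)
    (le_csInf (range_nonempty _) (forall_mem_range.2 hp))

end IsProxPoint

end ProxPoint

section Subgradient

variable {E : Type*} [NormedAddCommGroup E] [InnerProductSpace ℝ E] {h : E → ℝ}

def HasSubgradientAt (h : E → ℝ) (g x : E) : Prop :=
  ∀ z, h x + ⟪g, z - x⟫ ≤ h z

theorem HasSubgradientAt.inner_sub_nonneg {g₁ g₂ x₁ x₂ : E} (h₁ : HasSubgradientAt h g₁ x₁)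
    (h₂ : HasSubgradientAt h g₂ x₂) : 0 ≤ ⟪g₁ - g₂, x₁ - x₂⟫ := by
  have h₁₂ := h₁ x₂
  have h₂₁ := h₂ x₁
  rw [← neg_sub x₁ x₂, inner_neg_right] at h₁₂
  rw [inner_sub_left]
  linarith

theorem HasSubgradientAt.of_tendsto {ι : Type*} {l : Filter ι} [l.NeBot] {g x : ι → E}
    {g₀ x₀ : E} (hh : Continuous h) (hg : Tendsto g l (𝓝 g₀)) (hx : Tendsto x l (𝓝 x₀))
    (hsub : ∀ᶠ i in l, HasSubgradientAt h (g i) (x i)) : HasSubgradientAt h g₀ x₀ := fun z =>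
  le_of_tendsto (((hh.tendsto x₀).comp hx).add (hg.inner (tendsto_const_nhds.sub hx)))
    (hsub.mono fun _ hi => hi z)

theorem ConvexOn.hasSubgradientAt_of_forall_add_le [CompleteSpace E] {φ : E → ℝ} {v p : E}
    (hconv : ConvexOn ℝ univ h) (hφ : HasGradientAt φ v p)
    (hmin : ∀ z, h p + φ p ≤ h z + φ z) : HasSubgradientAt h (-v) p := by
  intro z
  have hline : HasDerivAt (fun t : ℝ => φ (p + t • (z - p))) ⟪v, z - p⟫ 0 := by
    have := hφ.hasFDerivAt.comp_hasDerivAt_of_eq (0 : ℝ)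
      (((hasDerivAt_id (0 : ℝ)).smul_const (z - p)).const_add p) (by simp)
    simp only [Function.comp_def, id, one_smul, InnerProductSpace.toDual_apply_apply] at this
    exact this
  have hslope : ∀ t ∈ Ioo (0 : ℝ) 1,
      h p - h z ≤ t⁻¹ • (φ (p + (0 + t) • (z - p)) - φ (p + (0 : ℝ) • (z - p))) := by
    rintro t ⟨ht₀, ht₁⟩
    have hconvt : h (p + t • (z - p)) ≤ (1 - t) * h p + t * h z := by
      have := hconv.2 (mem_univ p) (mem_univ z) (by linarith : (0 : ℝ) ≤ 1 - t) ht₀.le (by ring)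
      rwa [show (1 - t) • p + t • z = p + t • (z - p) by module] at this
    have := hmin (p + t • (z - p))
    simp only [zero_add, zero_smul, add_zero, smul_eq_mul]
    rw [le_inv_mul_iff₀ ht₀]
    nlinarith
  have := ge_of_tendsto hline.tendsto_slope_zero_right
    (eventually_of_mem (Ioo_mem_nhdsGT zero_lt_one) hslope)
  rw [inner_neg_left]
  linarith

variable [CompleteSpace E] {μ : ℝ}

namespace IsProxPoint

variable {y p : E}

theorem hasSubgradientAt (hp : IsProxPoint h μ y p) (hconv : ConvexOn ℝ univ h) :
    HasSubgradientAt h (μ⁻¹ • (y - p)) p := by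
  have hq : HasGradientAt (fun z => ‖z - y‖ ^ 2 / (2 * μ)) (μ⁻¹ • (p - y)) p := by
    rw [hasGradientAt_iff_hasFDerivAt]
    have := HasFDerivAt.mul_const (HasFDerivAt.norm_sq ((hasFDerivAt_id p).sub_const y)) (2 * μ)⁻¹
    simp only [id, ← div_eq_mul_inv] at this
    refine this.congr_fderiv (ContinuousLinearMap.ext fun d => ?_)
    simp only [mul_inv_rev, map_sub, ContinuousLinearMap.comp_id, smul_apply, sub_apply,
      coe_innerSL_apply, nsmul_eq_mul, Nat.cast_ofNat, smul_eq_mul, map_smul,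
      InnerProductSpace.toDual_apply_apply]
    ring
  have := hconv.hasSubgradientAt_of_forall_add_le hq hp
  rwa [← smul_neg, neg_sub] at this

theorem norm_sub_le_norm_sub {y' p' : E} (hp : IsProxPoint h μ y p)
    (hp' : IsProxPoint h μ y' p') (hconv : ConvexOn ℝ univ h) (hμ : 0 < μ) :
    ‖p - p'‖ ≤ ‖y - y'‖ := by
  have hmono := (hp.hasSubgradientAt hconv).inner_sub_nonneg (hp'.hasSubgradientAt hconv)
  rw [← smul_sub, real_inner_smul_left, show y - p - (y' - p') = (y - y') - (p - p') by abel,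
    inner_sub_left, real_inner_self_eq_norm_sq] at hmono
  have hsq : ‖p - p'‖ ^ 2 ≤ ‖y - y'‖ * ‖p - p'‖ :=
    (le_of_sub_nonneg (nonneg_of_mul_nonneg_right hmono (inv_pos.2 hμ))).trans
      (real_inner_le_norm _ _)
  nlinarith [norm_nonneg (p - p'), norm_nonneg (y - y')]

end IsProxPoint

theorem lipschitzWith_one_of_forall_isProxPoint {P : E → E}
    (hP : ∀ y, IsProxPoint h μ y (P y)) (hconv : ConvexOn ℝ univ h) (hμ : 0 < μ) :
    LipschitzWith 1 P :=
  LipschitzWith.of_dist_le_mul fun y y' => by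
    simpa [dist_eq_norm] using (hP y).norm_sub_le_norm_sub (hP y') hconv hμ

theorem hasGradientAt_moreauEnvelope {P : E → E} {x : E}
    (hP : ∀ y, IsProxPoint h μ y (P y)) (hPx : ContinuousAt P x) (hμ : 0 < μ) :
    HasGradientAt (moreauEnvelope h μ) (μ⁻¹ • (x - P x)) x := by
  have hsq : ∀ a y : E, ‖a - y‖ ^ 2 = ‖a - x‖ ^ 2 + 2 * ⟪x - a, y - x⟫ + ‖y - x‖ ^ 2 := by
    intro a y
    rw [show a - y = (a - x) - (y - x) by abel, norm_sub_sq_real, ← neg_sub x a, inner_neg_left]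
    ring
  set ε := fun y => ‖y - x‖ / (2 * μ) + ‖P y - P x‖ / μ
  -- `M y` is compared with `M x` through the prox point of `y` (lower bound) and of `x` (upper).
  have hbound : ∀ y, |moreauEnvelope h μ y - moreauEnvelope h μ x - ⟪μ⁻¹ • (x - P x), y - x⟫|
      ≤ ε y * ‖y - x‖ := by
    intro y
    have h2μ : 0 < 2 * μ := by positivity
    have hquad : 0 ≤ ‖y - x‖ ^ 2 / (2 * μ) := div_nonneg (sq_nonneg _) h2μ.le
    have hprod : 0 ≤ ‖P y - P x‖ * ‖y - x‖ / μ := div_nonneg (by positivity) hμ.le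
    have hcs : -(‖P y - P x‖ * ‖y - x‖) / μ ≤ ⟪P x - P y, y - x⟫ / μ := by
      refine div_le_div_of_nonneg_right (neg_le_of_abs_le ?_) hμ.le
      rw [norm_sub_rev (P y)]
      exact abs_real_inner_le_norm _ _
    have hsplit : ⟪x - P y, y - x⟫ = ⟪x - P x, y - x⟫ + ⟪P x - P y, y - x⟫ := by
      rw [← inner_add_left, sub_add_sub_cancel]
    rw [(hP y).moreauEnvelope_eq, (hP x).moreauEnvelope_eq, real_inner_smul_left, abs_le]
    constructor
    · linear_combination hP x (P y) - hsq (P y) y / (2 * μ) - hsplit / μ + hcs + 2 * hquad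
    · linear_combination hP y (P x) + hsq (P x) y / (2 * μ) + hprod
  have hε : Tendsto ε (𝓝 x) (𝓝 0) := by
    have hid := tendsto_iff_norm_sub_tendsto_zero.1 (continuousAt_id (x := x))
    simpa [ε] using
      (hid.div_const (2 * μ)).add ((tendsto_iff_norm_sub_tendsto_zero.1 hPx).div_const μ)
  rw [hasGradientAt_iff_isLittleO]
  refine Asymptotics.isLittleO_iff.2 fun c hc => ?_
  filter_upwards [hε (Iic_mem_nhds hc)] with y hy
  rw [Real.norm_eq_abs]
  exact (hbound y).trans (mul_le_mul_of_nonneg_right hy (norm_nonneg _))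

end Subgradient

theorem stmt_12 {n : ℕ} (f h : EuclideanSpace ℝ (Fin n) → ℝ) (Lh : ℝ)
    (hf : ContDiff ℝ 1 f)
    (hconv : ConvexOn ℝ Set.univ h)
    (hLip : ∀ a b, |h a - h b| ≤ Lh * ‖a - b‖)
    (x : ℕ → EuclideanSpace ℝ (Fin n)) (xstar : EuclideanSpace ℝ (Fin n))
    (μ : ℕ → ℝ) (hμpos : ∀ j, 0 < μ j)
    (hx : Filter.Tendsto x Filter.atTop (nhds xstar))
    (hμ : Filter.Tendsto μ Filter.atTop (nhds 0))
    (hgrad : Filter.Tendsto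
      (fun j => gradient f (x j) +
        gradient (fun y => sInf (Set.range fun z => h z + ‖z - y‖ ^ 2 / (2 * μ j))) (x j))
      Filter.atTop (nhds 0)) :
    ∀ z, h xstar + ⟪-gradient f xstar, z - xstar⟫ ≤ h z := by
  have hh : LipschitzWith Lh.toNNReal h :=
    LipschitzWith.of_dist_le' fun a b => by rw [Real.dist_eq, dist_eq_norm]; exact hLip a b
  choose P hP using fun j => exists_isProxPoint hh (hμpos j)
  have hgradM : ∀ j, gradient (moreauEnvelope h (μ j)) (x j) = (μ j)⁻¹ • (x j - P j (x j)) :=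
    fun j => (hasGradientAt_moreauEnvelope (hP j)
      (lipschitzWith_one_of_forall_isProxPoint (hP j) hconv (hμpos j)).continuous.continuousAt
      (hμpos j)).gradient
  have hprox : Tendsto (fun j => P j (x j)) atTop (𝓝 xstar) := by
    have hdist : Tendsto (fun j => P j (x j) - x j) atTop (𝓝 0) :=
      squeeze_zero_norm (fun j => (hP j (x j)).norm_sub_le hh (hμpos j))
        (by simpa using hμ.const_mul (2 * (Lh.toNNReal : ℝ)))
    simpa using hdist.add hx
  have hgradf : Continuous (gradient f) :=
    (InnerProductSpace.toDual ℝ _).symm.continuous.comp (hf.continuous_fderiv one_ne_zero)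
  have hsubgrad :
      Tendsto (fun j => (μ j)⁻¹ • (x j - P j (x j))) atTop (𝓝 (-gradient f xstar)) := by
    have := hgrad.sub ((hgradf.tendsto xstar).comp hx)
    simp only [Function.comp_apply, add_sub_cancel_left, zero_sub] at this
    exact this.congr fun j => hgradM j
  exact HasSubgradientAt.of_tendsto hh.continuous hsubgrad hprox
    (Eventually.of_forall fun j => (hP j (x j)).hasSubgradientAt hconv)
end
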